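/- arXiv:2106.14848 — 3 statements merged into one kernel-verified Lean document; each statement's English description precedes it below -/
import Mathlib

section
/- For every finite simple connected graph G of order n ≥ 2 and every positive integer k, one has 2 ≤ γ_k(G) + dim_k(G) ≤ n; moreover, γ_k(G) + dim_k(G) = 2 if and only if G is isomorphic to the path P_i for some i with 2 ≤ i ≤ k + 2. -/
open SimpleGraph Finset

/-- `D` is a distance-`k` dominating set of `G`: every vertex outside `D` is within
distance `k` of some vertex of `D`. -/
def IsKDomSet {V : Type*} (G : SimpleGraph V) (k : ℕ) (D : Finset V) : Prop :=
  ∀ u : V, u ∉ D → ∃ w ∈ D, G.dist u w ≤ k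

/-- `R` is a distance-`k` resolving set of `G`: any two distinct vertices are
distinguished by the truncated distance `d_k(x,y) = min (d(x,y)) (k+1)` to some vertex of `R`. -/
def IsKResSet {V : Type*} (G : SimpleGraph V) (k : ℕ) (R : Finset V) : Prop :=
  ∀ x y : V, x ≠ y → ∃ z ∈ R, min (G.dist x z) (k + 1) ≠ min (G.dist y z) (k + 1)

/-- The distance-`k` domination number `γ_k(G)`. -/
noncomputable def kdom {V : Type*} (G : SimpleGraph V) (k : ℕ) : ℕ :=
  sInf {m : ℕ | ∃ D : Finset V, IsKDomSet G k D ∧ D.card = m}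

/-- The distance-`k` dimension `dim_k(G)`. -/
noncomputable def kdim {V : Type*} (G : SimpleGraph V) (k : ℕ) : ℕ :=
  sInf {m : ℕ | ∃ R : Finset V, IsKResSet G k R ∧ R.card = m}

/-- The distance-`k` location-domination number `γ_L^k(G)`. -/
noncomputable def kld {V : Type*} (G : SimpleGraph V) (k : ℕ) : ℕ :=
  sInf {m : ℕ | ∃ S : Finset V, IsKDomSet G k S ∧ IsKResSet G k S ∧ S.card = m}

/-! Both parameters are positive. For the upper bound, take a minimum distance-`k` dominating set
`D` with as few vertices isolated in `G[D]` as possible; its complement is distance-`k` resolving.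
Outside vertices resolve themselves, and if `V \ D` resolved no pair `x ≠ y` of `D`, then `x` and
`y` would `k`-dominate the same outside vertices, so by minimality each is farther than `k` from
the rest of `D`; trading `y` for a neighbour of `x` would then isolate fewer vertices.

If `γ_k + dim_k = 2`, some `{z}` is resolving, so the distance to `z` is injective: `G` is a path
ending at `z`, on at most `k + 2` vertices since truncated distances take `k + 2` values.
Conversely, in `P_i` an end vertex resolves and its neighbour dominates. -/

namespace SimpleGraph

variable {V W : Type*} {G : SimpleGraph V} {H : SimpleGraph W}

lemma Connected.exists_adj_dist_eq_of_dist_eq_succ (hG : G.Connected) {v z : V} {j : ℕ}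
    (h : G.dist v z = j + 1) : ∃ c, G.Adj v c ∧ G.dist c z = j := by
  obtain ⟨p, hp⟩ := hG.exists_walk_length_eq_dist v z
  cases p with
  | nil => simp at h
  | @cons _ c _ hadj q =>
    refine ⟨_, hadj, le_antisymm ?_ ?_⟩
    · have := dist_le q
      simp only [Walk.length_cons] at hp
      omega
    · have := hG.dist_triangle (u := v) (v := c) (w := z)
      rw [dist_eq_one_iff_adj.mpr hadj] at this
      omega

lemma edist_map_le (f : G →g H) (u v : V) : H.edist (f u) (f v) ≤ G.edist u v := by
  rw [edist_eq_sInf (G := G)]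
  exact le_sInf (by rintro _ ⟨p, rfl⟩; simpa using H.edist_le (p.map f))

lemma Iso.dist_apply (e : G ≃g H) (u v : V) : H.dist (e u) (e v) = G.dist u v := by
  have h := edist_map_le e.symm.toHom (e u) (e v)
  simp only [RelEmbedding.coe_toRelHom, RelIso.coe_toRelEmbedding, RelIso.symm_apply_apply] at h
  exact congrArg ENat.toNat (le_antisymm (edist_map_le e.toHom u v) h)

lemma le_add_length_of_walk_pathGraph {n : ℕ} {u v : Fin n} (p : (pathGraph n).Walk u v) :
    (v : ℕ) ≤ u + p.length := by
  induction p with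
  | nil => simp
  | cons hadj _ ih =>
    rw [pathGraph_adj] at hadj
    simp only [Walk.length_cons]
    omega

lemma pathGraph_dist_of_le {n : ℕ} {u v : Fin n} (h : u ≤ v) :
    (pathGraph n).dist u v = v - u := by
  refine le_antisymm ?_ ?_
  · suffices ∀ m : ℕ, ∀ v : Fin n, (v : ℕ) = u + m → (pathGraph n).dist u v ≤ m from
      this _ v (by omega)
    intro m
    induction m with
    | zero => intro v hv; simp [Fin.ext (by omega : (v : ℕ) = u)]
    | succ m ih =>
      intro v hv
      have hadj : (pathGraph n).Adj ⟨u + m, by omega⟩ v :=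
        pathGraph_adj.mpr (.inl (by simp; omega))
      calc (pathGraph n).dist u v
          ≤ (pathGraph n).dist u ⟨u + m, _⟩ + (pathGraph n).dist ⟨u + m, _⟩ v :=
            hadj.reachable.dist_triangle_right u
        _ ≤ m + 1 := by
          rw [dist_eq_one_iff_adj.mpr hadj]
          exact Nat.add_le_add_right (ih _ rfl) 1
  · obtain ⟨p, hp⟩ := (pathGraph_preconnected n u v).exists_walk_length_eq_dist
    have := le_add_length_of_walk_pathGraph p
    omega

lemma Connected.nonempty_iso_pathGraph_of_injective_dist [Fintype V] (hG : G.Connected) {z : V}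
    (hinj : Function.Injective (G.dist · z)) : Nonempty (G ≃g pathGraph (Fintype.card V)) := by
  have hlt (v : V) : G.dist v z < Fintype.card V := by
    obtain ⟨p, hp, hlen⟩ := hG.exists_path_of_dist v z
    exact hlen ▸ hp.length_lt
  let φ : V → Fin (Fintype.card V) := fun v => ⟨G.dist v z, hlt v⟩
  have hφ : φ.Bijective := by
    rw [Fintype.bijective_iff_injective_and_card]
    exact ⟨fun a b hab => hinj (Fin.val_eq_of_eq hab), (Fintype.card_fin _).symm⟩
  -- `a` is the only vertex at its distance from `z`, so it is the next vertex on a shortest path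
  have hstep {a b : V} (h : G.dist a z + 1 = G.dist b z) : G.Adj a b := by
    obtain ⟨c, hbc, hc⟩ := hG.exists_adj_dist_eq_of_dist_eq_succ h.symm
    exact hinj hc ▸ hbc.symm
  refine ⟨⟨Equiv.ofBijective φ hφ, fun {a b} => ?_⟩⟩
  simp only [Equiv.ofBijective_apply, pathGraph_adj, φ]
  refine ⟨fun h => h.elim hstep fun h => (hstep h).symm, fun hab => ?_⟩
  have hne : G.dist a z ≠ G.dist b z := fun h => hab.ne (hinj h)
  rcases hab.symm.diff_dist_adj (u := z) with h | h | h <;>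
    simp only [dist_comm (u := z)] at h <;> omega

end SimpleGraph

section Domination

variable {V W : Type*} {G : SimpleGraph V} {H : SimpleGraph W} {k : ℕ}

lemma kdom_le_card {D : Finset V} (hD : IsKDomSet G k D) : kdom G k ≤ D.card :=
  Nat.sInf_le ⟨D, hD, rfl⟩

lemma kdim_le_card {R : Finset V} (hR : IsKResSet G k R) : kdim G k ≤ R.card :=
  Nat.sInf_le ⟨R, hR, rfl⟩

lemma exists_isKDomSet_card_eq_kdom [Fintype V] :
    ∃ D : Finset V, IsKDomSet G k D ∧ D.card = kdom G k :=
  Nat.sInf_mem (s := {m | ∃ D : Finset V, IsKDomSet G k D ∧ D.card = m})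
    ⟨_, univ, fun u hu => absurd (mem_univ u) hu, rfl⟩

lemma min_dist_self_ne (hG : G.Connected) {u v : V} (h : u ≠ v) :
    min (G.dist u u) (k + 1) ≠ min (G.dist v u) (k + 1) := by
  have := hG.pos_dist_of_ne h.symm
  rw [dist_self]
  omega

lemma exists_isKResSet_card_eq_kdim [Fintype V] (hG : G.Connected) :
    ∃ R : Finset V, IsKResSet G k R ∧ R.card = kdim G k :=
  Nat.sInf_mem (s := {m | ∃ R : Finset V, IsKResSet G k R ∧ R.card = m})
    ⟨_, univ, fun x _ hxy => ⟨x, mem_univ x, min_dist_self_ne hG hxy⟩, rfl⟩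

lemma one_le_kdom [Fintype V] [Nonempty V] : 1 ≤ kdom G k := by
  obtain ⟨D, hD, hcard⟩ := exists_isKDomSet_card_eq_kdom (G := G) (k := k)
  obtain ⟨v⟩ := ‹Nonempty V›
  have hne : D.Nonempty := by
    by_cases hv : v ∈ D
    · exact ⟨v, hv⟩
    · obtain ⟨w, hw, -⟩ := hD v hv
      exact ⟨w, hw⟩
  exact hcard ▸ hne.card_pos

lemma one_le_kdim [Fintype V] [Nontrivial V] (hG : G.Connected) : 1 ≤ kdim G k := by
  obtain ⟨R, hR, hcard⟩ := exists_isKResSet_card_eq_kdim (k := k) hG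
  obtain ⟨x, y, hxy⟩ := exists_pair_ne V
  obtain ⟨z, hz, -⟩ := hR x y hxy
  exact hcard ▸ card_pos.mpr ⟨z, hz⟩

lemma IsKDomSet.map_iso {D : Finset V} (hD : IsKDomSet G k D) (e : G ≃g H) :
    IsKDomSet H k (D.map e.toEquiv.toEmbedding) := by
  intro u hu
  rw [mem_map_equiv] at hu
  obtain ⟨w, hw, hdist⟩ := hD _ hu
  refine ⟨e w, mem_map_of_mem _ hw, ?_⟩
  rw [← e.dist_apply] at hdist
  convert hdist
  exact (e.toEquiv.apply_symm_apply u).symm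

lemma IsKResSet.map_iso {R : Finset V} (hR : IsKResSet G k R) (e : G ≃g H) :
    IsKResSet H k (R.map e.toEquiv.toEmbedding) := by
  intro x y hxy
  obtain ⟨z, hz, hne⟩ := hR (e.symm x) (e.symm y) (e.symm.injective.ne hxy)
  refine ⟨e z, mem_map_of_mem _ hz, ?_⟩
  simpa [← e.dist_apply (e.symm _)] using hne

lemma isKResSet_singleton_iff {z : V} :
    IsKResSet G k {z} ↔ Function.Injective (fun v => min (G.dist v z) (k + 1)) := by
  simp only [IsKResSet, mem_singleton, exists_eq_left, Function.Injective]
  exact ⟨fun h x y hxy => not_imp_comm.mp (h x y) (not_not.mpr hxy),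
    fun h x y hxy hz => hxy (h hz)⟩

lemma card_le_of_isKResSet_singleton [Fintype V] {z : V} (h : IsKResSet G k {z}) :
    Fintype.card V ≤ k + 2 := by
  have hinj := isKResSet_singleton_iff.mp h
  simpa using Fintype.card_le_of_injective
    (fun v => (⟨min (G.dist v z) (k + 1), by omega⟩ : Fin (k + 2)))
    (fun a b hab => hinj (Fin.val_eq_of_eq hab))

lemma isKResSet_pathGraph_zero {n : ℕ} (hn : n ≤ k + 2) (h0 : 0 < n) :
    IsKResSet (pathGraph n) k {⟨0, h0⟩} := by
  have hdist (v : Fin n) : (pathGraph n).dist v ⟨0, h0⟩ = v := by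
    rw [SimpleGraph.dist_comm, pathGraph_dist_of_le (Nat.zero_le _)]
    rfl
  refine isKResSet_singleton_iff.mpr fun a b hab => Fin.ext ?_
  simp only [hdist] at hab
  omega

lemma isKDomSet_pathGraph_one {n : ℕ} (hk : 1 ≤ k) (hn : n ≤ k + 2) (h1 : 1 < n) :
    IsKDomSet (pathGraph n) k {⟨1, h1⟩} := by
  refine fun v _ => ⟨_, mem_singleton_self _, ?_⟩
  have := v.isLt
  rcases le_total v ⟨1, h1⟩ with h | h
  · rw [pathGraph_dist_of_le h]
    simp only [Fin.le_def] at h ⊢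
    omega
  · rw [SimpleGraph.dist_comm, pathGraph_dist_of_le h]
    simp only [Fin.le_def] at h ⊢
    omega

end Domination

section Exchange

variable {V : Type*} {G : SimpleGraph V} {k : ℕ}

def isolatedIn (G : SimpleGraph V) [DecidableRel G.Adj] (D : Finset V) : Finset V :=
  D.filter fun x => ∀ b ∈ D, ¬G.Adj x b

lemma IsKDomSet.lt_dist_of_forall_card_le [DecidableEq V] {D : Finset V}
    (hD : IsKDomSet G k D) (hmin : ∀ D', IsKDomSet G k D' → D.card ≤ D'.card) {x y : V}
    (hx : x ∈ D) (hy : y ∈ D) (hxy : x ≠ y)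
    (hcov : ∀ u ∉ D, G.dist u y ≤ k → G.dist u x ≤ k) : ∀ b ∈ D, b ≠ y → k < G.dist y b := by
  by_contra! ⟨b, hb, hby, hyb⟩
  have herase : IsKDomSet G k (D.erase y) := by
    intro u hu
    by_cases huy : u = y
    · exact ⟨b, mem_erase.mpr ⟨hby, hb⟩, huy ▸ hyb⟩
    have huD : u ∉ D := fun h => hu (mem_erase.mpr ⟨huy, h⟩)
    obtain ⟨v, hv, huv⟩ := hD u huD
    by_cases hvy : v = y
    · exact ⟨x, mem_erase.mpr ⟨hxy, hx⟩, hcov u huD (hvy ▸ huv)⟩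
    · exact ⟨v, mem_erase.mpr ⟨hvy, hv⟩, huv⟩
  have := hmin _ herase
  rw [card_erase_of_mem hy] at this
  have := card_pos.mpr ⟨y, hy⟩
  omega

lemma IsKDomSet.exchange [DecidableEq V] {D : Finset V} (hD : IsKDomSet G k D) {x y w : V}
    (hx : x ∈ D) (hxy : x ≠ y) (hcov : ∀ u ∉ D, G.dist u y ≤ k → G.dist u x ≤ k)
    (hyw : G.dist y w ≤ k) :
    IsKDomSet G k (insert w (D.erase y)) := by
  intro u hu
  simp only [mem_insert, mem_erase, not_or, not_and_or, not_not] at hu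
  obtain ⟨-, huy | huD⟩ := hu
  · exact ⟨w, mem_insert_self _ _, huy ▸ hyw⟩
  obtain ⟨v, hv, huv⟩ := hD u huD
  by_cases hvy : v = y
  · exact ⟨x, mem_insert_of_mem (mem_erase.mpr ⟨hxy, hx⟩), hcov u huD (hvy ▸ huv)⟩
  · exact ⟨v, mem_insert_of_mem (mem_erase.mpr ⟨hvy, hv⟩), huv⟩

lemma card_isolatedIn_exchange_lt [DecidableEq V] [DecidableRel G.Adj] {D : Finset V}
    {x y w : V} (hx : x ∈ D) (hy : y ∈ D) (hxy : x ≠ y) (hyD : ∀ b ∈ D, ¬G.Adj y b)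
    (hxw : G.Adj x w) :
    (isolatedIn G (insert w (D.erase y))).card < (isolatedIn G D).card := by
  have hyiso : y ∈ isolatedIn G D := mem_filter.mpr ⟨hy, hyD⟩
  refine card_lt_card (Finset.ssubset_of_subset_of_ssubset ?_ (erase_ssubset hyiso))
  intro v hv
  obtain ⟨hvD', hviso⟩ := mem_filter.mp hv
  have hxD' : x ∈ insert w (D.erase y) := mem_insert_of_mem (mem_erase.mpr ⟨hxy, hx⟩)
  have hvw : v ≠ w := by rintro rfl; exact hviso x hxD' hxw.symm
  obtain ⟨hvy, hvD⟩ := mem_erase.mp ((mem_insert.mp hvD').resolve_left hvw)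
  refine mem_erase.mpr ⟨hvy, mem_filter.mpr ⟨hvD, fun b hb hvb => ?_⟩⟩
  by_cases hby : b = y
  · exact hyD v hvD (hby ▸ hvb.symm)
  · exact hviso b (mem_insert_of_mem (mem_erase.mpr ⟨hby, hb⟩)) hvb

lemma IsKDomSet.exists_card_isolatedIn_lt [DecidableEq V] [DecidableRel G.Adj] [Nontrivial V]
    (hG : G.Connected) (hk : 1 ≤ k) {D : Finset V} (hD : IsKDomSet G k D)
    (hmin : ∀ D', IsKDomSet G k D' → D.card ≤ D'.card) {x y : V} (hx : x ∈ D) (hy : y ∈ D)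
    (hxy : x ≠ y) (hcov : ∀ u ∉ D, G.dist u x ≤ k ↔ G.dist u y ≤ k) :
    ∃ D', IsKDomSet G k D' ∧ D'.card = D.card ∧
      (isolatedIn G D').card < (isolatedIn G D).card := by
  have hxfar := hD.lt_dist_of_forall_card_le hmin hy hx hxy.symm fun u hu => (hcov u hu).mp
  have hyfar := hD.lt_dist_of_forall_card_le hmin hx hy hxy fun u hu => (hcov u hu).mpr
  obtain ⟨w, hxw⟩ := hG.preconnected.exists_adj_of_nontrivial x
  have hxw1 := dist_eq_one_iff_adj.mpr hxw
  have hwD : w ∉ D := fun hw => by have := hxfar w hw hxw.ne.symm; omega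
  have hyw : G.dist y w ≤ k := by
    rw [SimpleGraph.dist_comm] at hxw1 ⊢
    exact (hcov w hwD).mp (by omega)
  have hyiso (b) (hb : b ∈ D) (hyb : G.Adj y b) : False := by
    have := hyfar b hb hyb.ne.symm
    rw [dist_eq_one_iff_adj.mpr hyb] at this
    omega
  refine ⟨_, hD.exchange hx hxy (fun u hu => (hcov u hu).mpr) hyw, ?_,
    card_isolatedIn_exchange_lt hx hy hxy hyiso hxw⟩
  rw [card_insert_of_notMem fun h => hwD (mem_of_mem_erase h), card_erase_of_mem hy,
    Nat.sub_add_cancel (card_pos.mpr ⟨y, hy⟩)]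

theorem exists_isKDomSet_card_eq_kdom_isKResSet_compl [Fintype V] [DecidableEq V]
    [Nontrivial V] (hG : G.Connected) (hk : 1 ≤ k) :
    ∃ D : Finset V, IsKDomSet G k D ∧ D.card = kdom G k ∧ IsKResSet G k (univ \ D) := by
  classical
  obtain ⟨D, hD, hmin⟩ := (univ.filter fun D : Finset V => IsKDomSet G k D ∧ D.card = kdom G k
    ).exists_min_image (fun D => (isolatedIn G D).card) (by
      obtain ⟨D, hD⟩ := exists_isKDomSet_card_eq_kdom (G := G) (k := k)
      exact ⟨D, mem_filter.mpr ⟨mem_univ _, hD⟩⟩)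
  obtain ⟨-, hD, hcard⟩ := mem_filter.mp hD
  refine ⟨D, hD, hcard, fun x y hxy => ?_⟩
  by_cases hxD : x ∉ D
  · exact ⟨x, by simpa using hxD, min_dist_self_ne hG hxy⟩
  by_cases hyD : y ∉ D
  · exact ⟨y, by simpa using hyD, (min_dist_self_ne hG hxy.symm).symm⟩
  rw [not_not] at hxD hyD
  by_contra! htwin
  have hcov (u) (hu : u ∉ D) : G.dist u x ≤ k ↔ G.dist u y ≤ k := by
    have := htwin u (by simpa using hu)
    rw [SimpleGraph.dist_comm (u := x), SimpleGraph.dist_comm (u := y)] at this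
    omega
  obtain ⟨D', hD', hcard', hlt⟩ := hD.exists_card_isolatedIn_lt hG hk
    (fun D' h => hcard ▸ kdom_le_card h) hxD hyD hxy hcov
  exact (hmin D' (mem_filter.mpr ⟨mem_univ _, hD', hcard' ▸ hcard⟩)).not_gt hlt

end Exchange

/-- For every finite simple connected graph `G` of order `n ≥ 2` and positive
integer `k`: `2 ≤ γ_k(G) + dim_k(G) ≤ n`, and `γ_k(G) + dim_k(G) = 2` iff `G` is
isomorphic to a path `P_i` with `2 ≤ i ≤ k + 2`. -/
theorem stmt_3 {V : Type*} [Fintype V] (G : SimpleGraph V) (hG : G.Connected)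
    (hn : 2 ≤ Fintype.card V) (k : ℕ) (hk : 1 ≤ k) :
    (2 ≤ kdom G k + kdim G k ∧ kdom G k + kdim G k ≤ Fintype.card V) ∧
    (kdom G k + kdim G k = 2 ↔
      ∃ i : ℕ, 2 ≤ i ∧ i ≤ k + 2 ∧ Nonempty (G ≃g pathGraph i)) := by
  classical
  have : Nontrivial V := Fintype.one_lt_card_iff_nontrivial.mp hn
  obtain ⟨D, hD, hcard, hres⟩ := exists_isKDomSet_card_eq_kdom_isKResSet_compl hG hk
  have hdim := kdim_le_card hres
  rw [card_sdiff_of_subset (subset_univ D), card_univ] at hdim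
  have hdom : kdom G k ≤ Fintype.card V := hcard ▸ card_le_univ D
  have hdom1 : 1 ≤ kdom G k := one_le_kdom
  have hdim1 : 1 ≤ kdim G k := one_le_kdim hG
  refine ⟨⟨by omega, by omega⟩, fun h => ?_, ?_⟩
  · obtain ⟨R, hR, hRcard⟩ := exists_isKResSet_card_eq_kdim (k := k) hG
    obtain ⟨z, rfl⟩ := card_eq_one.mp (show R.card = 1 by omega)
    exact ⟨_, hn, card_le_of_isKResSet_singleton hR, hG.nonempty_iso_pathGraph_of_injective_dist
      (Function.Injective.of_comp (f := (min · (k + 1))) (isKResSet_singleton_iff.mp hR))⟩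
  · rintro ⟨i, hi, hik, ⟨e⟩⟩
    have hdom := kdom_le_card ((isKDomSet_pathGraph_one hk hik hi).map_iso e.symm)
    have hdim := kdim_le_card ((isKResSet_pathGraph_zero hik (by omega)).map_iso e.symm)
    simp only [card_map, card_singleton] at hdom hdim
    omega
end

section
/- For every finite simple connected graph G of order n ≥ 2, γ_L^1(G) = n − 1 if and only if G is isomorphic to the complete graph K_n or to the star K_{1,n−1}. -/
open SimpleGraph Finset

/-!
Since `min (d x z) 2` only records whether `z = x`, `z ~ x` or neither, a set `S` is distance-1
locating-dominating exactly when every vertex outside `S` has a neighbour in `S` and no two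
vertices outside `S` have the same neighbours in `S`. In `K_n` any two vertices have the same
neighbours in the rest, and in a star two leaves do while the centre and a leaf cannot both be
dominated from outside, so `n - 1` is forced there. Conversely, if `G` is neither, take an
induced path `x - w - y`: if `x` has a neighbour besides `w`, removing `x` and `w` leaves a
locating-dominating set (`y` separates them); if `x` is a leaf, an edge `s - t` avoiding `w`
exists because `G` is not a star at `w`, and removing `x` and `s` works (`t` separates them).
-/

namespace SimpleGraph

variable {V W : Type*}

lemma Iso.eq_top {G : SimpleGraph V} (e : G ≃g (⊤ : SimpleGraph W)) : G = ⊤ := by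
  ext x y
  rw [← e.map_adj_iff]
  simp [e.injective.ne_iff]

lemma Iso.eq_starGraph {G : SimpleGraph V} {c : W} (e : G ≃g starGraph c) :
    G = starGraph (e.symm c) := by
  ext x y
  rw [← e.map_adj_iff]
  simp [e.injective.ne_iff, RelIso.eq_symm_apply]

def Iso.starGraph (e : V ≃ W) (c : V) : starGraph c ≃g starGraph (e c) where
  toEquiv := e
  map_rel_iff' := by simp [e.injective.ne_iff]

lemma completeBipartiteGraph_eq_starGraph (α β : Type*) [Unique α] :
    completeBipartiteGraph α β = starGraph (Sum.inl default) := by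
  ext u v
  rcases u with a | b <;> rcases v with a' | b' <;> simp [Unique.uniq]

lemma nonempty_iso_top_iff [Fintype V] {G : SimpleGraph V} :
    Nonempty (G ≃g (⊤ : SimpleGraph (Fin (Fintype.card V)))) ↔ G = ⊤ :=
  ⟨fun ⟨e⟩ ↦ e.eq_top, fun h ↦ h ▸ ⟨Iso.completeGraph (Fintype.equivFin V)⟩⟩

lemma nonempty_iso_completeBipartiteGraph_iff [Fintype V] {α β : Type*} [Unique α] [Fintype β]
    {G : SimpleGraph V} (hcard : Fintype.card (α ⊕ β) = Fintype.card V) :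
    Nonempty (G ≃g completeBipartiteGraph α β) ↔ ∃ c, G = starGraph c := by
  classical
  rw [completeBipartiteGraph_eq_starGraph]
  constructor
  · rintro ⟨e⟩
    exact ⟨_, e.eq_starGraph⟩
  · rintro ⟨c, rfl⟩
    let f : V ≃ α ⊕ β := Fintype.equivOfCardEq hcard.symm
    let e := f.trans (Equiv.swap (f c) (Sum.inl default))
    have hc : e c = Sum.inl default := by simp [e]
    exact ⟨hc ▸ Iso.starGraph e c⟩

lemma Preconnected.eq_starGraph_of_forall_adj {G : SimpleGraph V} (hG : G.Preconnected) {c : V}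
    (h : ∀ s t, G.Adj s t → s = c ∨ t = c) : G = starGraph c := by
  have hcentre : ∀ v, v ≠ c → G.Adj v c := by
    intro v hv
    have : Nontrivial V := ⟨⟨v, c, hv⟩⟩
    obtain ⟨u, hvu⟩ := hG.exists_adj_of_nontrivial v
    exact (h v u hvu).resolve_left hv ▸ hvu
  ext s t
  rw [starGraph_adj]
  refine ⟨fun hst ↦ ⟨hst.ne, h s t hst⟩, ?_⟩
  rintro ⟨hst, rfl | rfl⟩
  · exact (hcentre t hst.symm).symm
  · exact hcentre s hst

lemma Reachable.min_dist_two_eq [DecidableEq V] {G : SimpleGraph V} [DecidableRel G.Adj] {x z : V}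
    (h : G.Reachable x z) :
    min (G.dist x z) 2 = if x = z then 0 else if G.Adj x z then 1 else 2 := by
  split_ifs with hxz hadj
  · simp [hxz]
  · simp [dist_eq_one_iff_adj.mpr hadj]
  · have := h.one_lt_dist_of_ne_of_not_adj hxz hadj
    omega

end SimpleGraph

section LocatingDomination

variable {V : Type*} {G : SimpleGraph V} {S : Finset V}

lemma isKDomSet_one_iff (hG : G.Preconnected) :
    IsKDomSet G 1 S ↔ ∀ u ∉ S, ∃ w ∈ S, G.Adj u w := by
  refine forall₂_congr fun u hu ↦ exists_congr fun w ↦ and_congr_right fun hw ↦ ?_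
  have hpos := (hG u w).pos_dist_of_ne (ne_of_mem_of_not_mem hw hu).symm
  rw [← dist_eq_one_iff_adj]
  omega

/-- Vertices of `S` resolve themselves, so only pairs outside `S` need a witness. -/
lemma isKResSet_one_iff (hG : G.Preconnected) :
    IsKResSet G 1 S ↔ ∀ x ∉ S, ∀ y ∉ S, x ≠ y → ∃ z ∈ S, ¬(G.Adj x z ↔ G.Adj y z) := by
  classical
  have hd : ∀ x z, min (G.dist x z) (1 + 1) = if x = z then 0 else if G.Adj x z then 1 else 2 :=
    fun x z ↦ (hG x z).min_dist_two_eq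
  simp only [IsKResSet, hd]
  constructor
  · intro hR x hx y hy hxy
    obtain ⟨z, hz, hxyz⟩ := hR x y hxy
    refine ⟨z, hz, fun hiff ↦ hxyz ?_⟩
    simp [ne_of_mem_of_not_mem hz hx |>.symm, ne_of_mem_of_not_mem hz hy |>.symm, hiff]
  · intro h x y hxy
    by_cases hx : x ∈ S
    · exact ⟨x, hx, by split_ifs <;> simp_all⟩
    by_cases hy : y ∈ S
    · exact ⟨y, hy, by split_ifs <;> simp_all⟩
    obtain ⟨z, hz, hxyz⟩ := h x hx y hy hxy
    refine ⟨z, hz, ?_⟩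
    simp only [ne_of_mem_of_not_mem hz hx |>.symm, ne_of_mem_of_not_mem hz hy |>.symm, if_false]
    split_ifs <;> simp_all

lemma kld_le {k : ℕ} (hD : IsKDomSet G k S) (hR : IsKResSet G k S) : kld G k ≤ S.card :=
  Nat.sInf_le ⟨S, hD, hR, rfl⟩

lemma isKResSet_univ [Fintype V] (hG : G.Preconnected) (k : ℕ) : IsKResSet G k univ := by
  intro x y hxy
  have := (hG y x).pos_dist_of_ne hxy.symm
  exact ⟨x, mem_univ x, by rw [dist_self]; omega⟩

lemma le_kld [Fintype V] (hG : G.Preconnected) {k m : ℕ}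
    (h : ∀ S : Finset V, IsKDomSet G k S → IsKResSet G k S → m ≤ S.card) : m ≤ kld G k := by
  obtain ⟨S, hD, hR, hS⟩ :=
    Nat.sInf_mem (s := {m | ∃ S : Finset V, IsKDomSet G k S ∧ IsKResSet G k S ∧ S.card = m})
      ⟨_, univ, fun u hu ↦ absurd (mem_univ u) hu, isKResSet_univ hG k, rfl⟩
  exact (h S hD hR).trans_eq hS

lemma sub_one_le_card_of_subsingleton_compl [Fintype V] (h : ∀ x ∉ S, ∀ y ∉ S, x = y) :
    Fintype.card V - 1 ≤ S.card := by
  classical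
  have : Sᶜ.card ≤ 1 := card_le_one.mpr fun x hx y hy ↦ h x (mem_compl.mp hx) y (mem_compl.mp hy)
  rw [card_compl] at this
  omega

lemma kld_one_le_card_sub_one [Fintype V] [Nontrivial V] (hG : G.Preconnected) :
    kld G 1 ≤ Fintype.card V - 1 := by
  classical
  obtain ⟨v⟩ := (inferInstance : Nonempty V)
  have hv : ∀ u ∉ univ.erase v, u = v := fun u hu ↦ by simpa using hu
  obtain ⟨w, hvw⟩ := hG.exists_adj_of_nontrivial v
  have hD : IsKDomSet G 1 (univ.erase v) := (isKDomSet_one_iff hG).mpr fun u hu ↦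
    ⟨w, by simp [hvw.ne'], hv u hu ▸ hvw⟩
  have hR : IsKResSet G 1 (univ.erase v) := (isKResSet_one_iff hG).mpr fun x hx y hy hxy ↦
    absurd ((hv x hx).trans (hv y hy).symm) hxy
  simpa using kld_le hD hR

lemma isKDomSet_isKResSet_compl_pair [DecidableEq V] [Fintype V] (hG : G.Preconnected)
    {a b p q z : V} (hap : G.Adj a p) (hpb : p ≠ b) (hbq : G.Adj b q) (hqa : q ≠ a)
    (hza : z ≠ a) (hzb : z ≠ b) (hz : ¬(G.Adj a z ↔ G.Adj b z)) :
    IsKDomSet G 1 {a, b}ᶜ ∧ IsKResSet G 1 {a, b}ᶜ := by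
  have hpair : ∀ u ∉ ({a, b}ᶜ : Finset V), u = a ∨ u = b := fun u hu ↦ by
    simpa [or_iff_not_imp_left] using hu
  constructor
  · refine (isKDomSet_one_iff hG).mpr fun u hu ↦ ?_
    rcases hpair u hu with rfl | rfl
    · exact ⟨p, by simp [hap.ne', hpb], hap⟩
    · exact ⟨q, by simp [hbq.ne', hqa], hbq⟩
  · refine (isKResSet_one_iff hG).mpr fun x hx y hy hxy ↦ ⟨z, by simp [hza, hzb], ?_⟩
    rcases hpair x hx with rfl | rfl <;> rcases hpair y hy with rfl | rfl
    all_goals first | exact absurd rfl hxy | exact hz | exact fun h ↦ hz h.symm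

theorem exists_compl_pair_isKDomSet_isKResSet [DecidableEq V] [Fintype V] (hG : G.Connected)
    (htop : G ≠ ⊤) (hstar : ∀ c, G ≠ starGraph c) :
    ∃ a b : V, a ≠ b ∧ IsKDomSet G 1 {a, b}ᶜ ∧ IsKResSet G 1 {a, b}ᶜ := by
  obtain ⟨u, v, huv, hnadj⟩ := ne_top_iff_exists_not_adj.mp htop
  obtain ⟨p, -, hp⟩ := hG.exists_path_of_dist u v
  obtain ⟨x, w, y, hxw, hwy, hxy, hxy'⟩ :=
    p.exists_adj_adj_not_adj_ne hp (hG.one_lt_dist_of_ne_of_not_adj huv hnadj)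
  by_cases hx : ∃ q, q ≠ w ∧ G.Adj x q
  · obtain ⟨q, hqw, hxq⟩ := hx
    exact ⟨x, w, hxw.ne, isKDomSet_isKResSet_compl_pair hG.preconnected hxq hqw hwy hxy'.symm
      hxy'.symm hwy.ne' (by simp [hxy, hwy])⟩
  push Not at hx
  by_cases hst : ∃ s t, s ≠ w ∧ t ≠ w ∧ G.Adj s t
  · obtain ⟨s, t, hsw, htw, hst⟩ := hst
    have hsx : s ≠ x := by rintro rfl; exact hx t htw hst
    have htx : t ≠ x := by rintro rfl; exact hx s hsw hst.symm
    exact ⟨x, s, hsx.symm, isKDomSet_isKResSet_compl_pair hG.preconnected hxw hsw.symm hst htx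
      htx hst.ne' (by simp [hst, hx t htw])⟩
  push Not at hst
  refine absurd (hG.preconnected.eq_starGraph_of_forall_adj fun s t hadj ↦ ?_) (hstar w)
  by_contra! h
  exact hst s t h.1 h.2 hadj

lemma sub_one_le_card_of_isKResSet_top [Fintype V] {S : Finset V}
    (hR : IsKResSet (⊤ : SimpleGraph V) 1 S) : Fintype.card V - 1 ≤ S.card := by
  refine sub_one_le_card_of_subsingleton_compl fun x hx y hy ↦ ?_
  by_contra hxy
  obtain ⟨z, hz, hxyz⟩ := (isKResSet_one_iff preconnected_top).mp hR x hx y hy hxy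
  simp [(ne_of_mem_of_not_mem hz hx).symm, (ne_of_mem_of_not_mem hz hy).symm] at hxyz

lemma sub_one_le_card_of_starGraph [Fintype V] {c : V} {S : Finset V}
    (hD : IsKDomSet (starGraph c) 1 S) (hR : IsKResSet (starGraph c) 1 S) :
    Fintype.card V - 1 ≤ S.card := by
  have hG := (connected_starGraph c).preconnected
  have hcentre : ∀ x ∉ S, ∀ y ∉ S, x = c → x = y := by
    rintro x hx y hy rfl
    obtain ⟨w, hw, hyw⟩ := (isKDomSet_one_iff hG).mp hD y hy
    rw [starGraph_adj] at hyw
    exact (hyw.2.resolve_right fun h ↦ hx (h ▸ hw)).symm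
  refine sub_one_le_card_of_subsingleton_compl fun x hx y hy ↦ ?_
  by_cases hxc : x = c
  · exact hcentre x hx y hy hxc
  by_cases hyc : y = c
  · exact (hcentre y hy x hx hyc).symm
  by_contra hxy
  obtain ⟨z, hz, hxyz⟩ := (isKResSet_one_iff hG).mp hR x hx y hy hxy
  simp [(ne_of_mem_of_not_mem hz hx).symm, (ne_of_mem_of_not_mem hz hy).symm, hxc, hyc] at hxyz

end LocatingDomination

/-- For every finite simple connected graph `G` of order `n ≥ 2`, `γ_L^1(G) = n - 1`
iff `G` is isomorphic to the complete graph `K_n` or to the star `K_{1,n-1}`. -/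
theorem stmt_6 {V : Type*} [Fintype V] (G : SimpleGraph V) (hG : G.Connected)
    (hn : 2 ≤ Fintype.card V) :
    kld G 1 = Fintype.card V - 1 ↔
      (Nonempty (G ≃g (⊤ : SimpleGraph (Fin (Fintype.card V)))) ∨
       Nonempty (G ≃g completeBipartiteGraph (Fin 1) (Fin (Fintype.card V - 1)))) := by
  classical
  have : Nontrivial V := Fintype.one_lt_card_iff_nontrivial.mp hn
  have hcard : Fintype.card (Fin 1 ⊕ Fin (Fintype.card V - 1)) = Fintype.card V := by
    simp only [Fintype.card_sum, Fintype.card_fin]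
    omega
  rw [nonempty_iso_top_iff, nonempty_iso_completeBipartiteGraph_iff hcard]
  have hle := kld_one_le_card_sub_one hG.preconnected
  constructor
  · intro h
    by_contra! hne
    obtain ⟨a, b, hab, hD, hR⟩ := exists_compl_pair_isKDomSet_isKResSet hG hne.1 hne.2
    have := kld_le hD hR
    rw [card_compl, card_pair hab] at this
    omega
  · rintro (rfl | ⟨c, rfl⟩)
    · exact hle.antisymm <| le_kld hG.preconnected fun _ _ hR ↦
        sub_one_le_card_of_isKResSet_top hR
    · exact hle.antisymm <| le_kld hG.preconnected fun _ hD hR ↦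
        sub_one_le_card_of_starGraph hD hR
end

section
/- Let G be a finite simple connected graph with at least 2 vertices and let e be an edge of G such that the graph G − e obtained from G by deleting e is still connected. Then γ_L^1(G) − 2 ≤ γ_L^1(G − e) ≤ γ_L^1(G) + 2. -/
open SimpleGraph Finset

/-
In a connected graph the truncated distance `min (d(x, z)) 2` only records whether `x = z`,
`x ~ z`, or neither. Deleting the edge `uv` changes adjacency only at `u` and `v`, so for
every other vertex these truncated distances are the same in `G` and `G - e`. Hence a
distance-1 locating-dominating set of one graph, enlarged by `u` and `v`, is one of the other:
vertices of the set resolve themselves from everything else, and the remaining vertices are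
dominated and resolved exactly as before.
-/

section

variable {V : Type*} {H H' : SimpleGraph V}

lemma min_dist_two_eq_of_adj_iff (hH : H.Connected) (hH' : H'.Connected) {x z : V}
    (hxz : H.Adj x z ↔ H'.Adj x z) : min (H.dist x z) 2 = min (H'.dist x z) 2 := by
  rcases eq_or_ne x z with rfl | hne
  · simp
  have h0 := hH.pos_dist_of_ne hne
  have h0' := hH'.pos_dist_of_ne hne
  have h1 : H.dist x z = 1 ↔ H'.dist x z = 1 := by
    simp only [dist_eq_one_iff_adj, hxz]
  omega

lemma min_dist_ne_of_ne (hH : H.Connected) (k : ℕ) {x y : V} (hxy : x ≠ y) :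
    min (H.dist x x) (k + 1) ≠ min (H.dist y x) (k + 1) := by
  have := hH.pos_dist_of_ne hxy.symm
  simp only [dist_self]
  omega

lemma isKResSet_of_mem_or_mem (hH : H.Connected) (k : ℕ) {S : Finset V}
    (hres : ∀ x y : V, x ≠ y → x ∉ S → y ∉ S →
      ∃ z ∈ S, min (H.dist x z) (k + 1) ≠ min (H.dist y z) (k + 1)) :
    IsKResSet H k S := by
  intro x y hxy
  by_cases hx : x ∈ S
  · exact ⟨x, hx, min_dist_ne_of_ne hH k hxy⟩
  by_cases hy : y ∈ S
  · exact ⟨y, hy, (min_dist_ne_of_ne hH k hxy.symm).symm⟩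
  exact hres x y hxy hx hy

lemma kld_le_card {k : ℕ} {S : Finset V} (hdom : IsKDomSet H k S) (hres : IsKResSet H k S) :
    kld H k ≤ S.card :=
  Nat.sInf_le ⟨S, hdom, hres, rfl⟩

lemma exists_card_eq_kld [Fintype V] (hH : H.Connected) (k : ℕ) :
    ∃ S : Finset V, IsKDomSet H k S ∧ IsKResSet H k S ∧ S.card = kld H k := by
  have hdom_univ : IsKDomSet H k univ := fun u hu => absurd (mem_univ u) hu
  have hres_univ : IsKResSet H k univ :=
    isKResSet_of_mem_or_mem hH k fun x _ _ hx _ => absurd (mem_univ x) hx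
  exact Nat.sInf_mem (s := {m | ∃ S : Finset V, IsKDomSet H k S ∧ IsKResSet H k S ∧ S.card = m})
    ⟨_, univ, hdom_univ, hres_univ, rfl⟩

variable [DecidableEq V]

lemma isKDomSet_one_union_pair (hH : H.Connected) {u v : V}
    (hadj : ∀ x z : V, x ≠ u → x ≠ v → (H.Adj x z ↔ H'.Adj x z))
    {S : Finset V} (hdom : IsKDomSet H 1 S) : IsKDomSet H' 1 (S ∪ {u, v}) := by
  intro p hp
  simp only [mem_union, mem_insert, mem_singleton, not_or] at hp
  obtain ⟨hpS, hpu, hpv⟩ := hp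
  obtain ⟨w, hwS, hw⟩ := hdom p hpS
  have hpw : H.Adj p w := by
    have := hH.pos_dist_of_ne (ne_of_mem_of_not_mem hwS hpS).symm
    exact dist_eq_one_iff_adj.mp (by omega)
  exact ⟨w, mem_union_left _ hwS, (dist_eq_one_iff_adj.mpr ((hadj p w hpu hpv).mp hpw)).le⟩

lemma isKResSet_one_union_pair (hH : H.Connected) (hH' : H'.Connected) {u v : V}
    (hadj : ∀ x z : V, x ≠ u → x ≠ v → (H.Adj x z ↔ H'.Adj x z))
    {S : Finset V} (hres : IsKResSet H 1 S) : IsKResSet H' 1 (S ∪ {u, v}) := by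
  refine isKResSet_of_mem_or_mem hH' 1 fun x y hxy hx hy => ?_
  simp only [mem_union, mem_insert, mem_singleton, not_or] at hx hy
  obtain ⟨z, hzS, hz⟩ := hres x y hxy
  refine ⟨z, mem_union_left _ hzS, ?_⟩
  rwa [← min_dist_two_eq_of_adj_iff hH hH' (hadj x z hx.2.1 hx.2.2),
    ← min_dist_two_eq_of_adj_iff hH hH' (hadj y z hy.2.1 hy.2.2)]

lemma kld_one_le_add_two_of_adj_iff [Fintype V] (hH : H.Connected) (hH' : H'.Connected)
    {u v : V} (hadj : ∀ x z : V, x ≠ u → x ≠ v → (H.Adj x z ↔ H'.Adj x z)) :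
    kld H' 1 ≤ kld H 1 + 2 := by
  obtain ⟨S, hdom, hres, hcard⟩ := exists_card_eq_kld hH 1
  calc kld H' 1 ≤ (S ∪ {u, v}).card :=
        kld_le_card (isKDomSet_one_union_pair hH hadj hdom)
          (isKResSet_one_union_pair hH hH' hadj hres)
    _ ≤ S.card + ({u, v} : Finset V).card := card_union_le _ _
    _ ≤ kld H 1 + 2 := by rw [hcard]; exact Nat.add_le_add_left card_le_two _

end

lemma SimpleGraph.deleteEdges_adj_iff_of_ne {V : Type*} (G : SimpleGraph V) {u v x z : V}
    (hxu : x ≠ u) (hxv : x ≠ v) : (G.deleteEdges {s(u, v)}).Adj x z ↔ G.Adj x z := by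
  have : s(x, z) ≠ s(u, v) := fun h => by
    rcases Sym2.eq_iff.mp h with ⟨rfl, -⟩ | ⟨rfl, -⟩ <;> contradiction
  simp [deleteEdges_adj, this]

theorem stmt_17_general {V : Type*} [Fintype V] (G : SimpleGraph V) (hG : G.Connected)
    (e : Sym2 V)
    (hc : (G.deleteEdges {e}).Connected) :
    kld G 1 ≤ kld (G.deleteEdges {e}) 1 + 2 ∧
      kld (G.deleteEdges {e}) 1 ≤ kld G 1 + 2 := by
  classical
  induction e using Sym2.ind with
  | _ u v =>
  exact ⟨kld_one_le_add_two_of_adj_iff hc hG fun _ _ hxu hxv =>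
      G.deleteEdges_adj_iff_of_ne hxu hxv,
    kld_one_le_add_two_of_adj_iff hG hc fun _ _ hxu hxv =>
      (G.deleteEdges_adj_iff_of_ne hxu hxv).symm⟩

/-- If `G` is a finite simple connected graph with at least 2 vertices and `e` an edge of
`G` with `G - e` connected, then `γ_L^1(G) - 2 ≤ γ_L^1(G - e) ≤ γ_L^1(G) + 2`. -/
theorem stmt_17 {V : Type*} [Fintype V] (G : SimpleGraph V) (hG : G.Connected)
    (hn : 2 ≤ Fintype.card V) (e : Sym2 V) (he : e ∈ G.edgeSet)
    (hc : (G.deleteEdges {e}).Connected) :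
    kld G 1 ≤ kld (G.deleteEdges {e}) 1 + 2 ∧
      kld (G.deleteEdges {e}) 1 ≤ kld G 1 + 2 :=
  stmt_17_general G hG e hc
end
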